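/- For every m ∈ ℕ, the map sending y ∈ LOP(m) to the vector consisting of the coordinates y_{ij} (1 ≤ i < j ≤ m), the coordinates ȳ_{ij} = 1 − y_{ij} (1 ≤ i < j ≤ m), the two constants z = 0 and h = 1, and the coordinates t_{ijk} = 1 − (y_{ij} + y_{jk} − y_{ik}) (1 ≤ i < j < k ≤ m), is an injective affine map whose image is exactly the set of 0/1 vectors satisfying z = 0, h = 1, the equations y_{ij} + ȳ_{ij} + z + h = 2 for all 1 ≤ i < j ≤ m, and the equations y_{ij} + y_{jk} + ȳ_{ik} + t_{ijk} = 2 for all 1 ≤ i < j < k ≤ m; each of these equations has exactly four variables with coefficient 1, so LOP(m) is affinely equivalent to a face of a double covering polytope. -/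

import Mathlib

/-- `y ∈ LOP m`: `y` is the characteristic vector of a linear order (permutation `π`)
on `{1, …, m}`, with coordinates `y i j` for `1 ≤ i < j ≤ m` equal to `1` iff `π i < π j`;
coordinates outside the index range are normalized to `0`. -/
def LOP (m : ℕ) : Set (ℕ → ℕ → ℝ) :=
  {y | (∀ i j, ¬(1 ≤ i ∧ i < j ∧ j ≤ m) → y i j = 0) ∧
    ∃ π : ℕ → ℕ, Set.BijOn π (Set.Icc 1 m) (Set.Icc 1 m) ∧
      ∀ i j, 1 ≤ i → i < j → j ≤ m → y i j = if π i < π j then (1 : ℝ) else 0}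

/-- The target set: 0/1 vectors `(u, ū, z, h, t)` with `z = 0`, `h = 1`,
satisfying the double-covering equations `u i j + ū i j + z + h = 2` for
`1 ≤ i < j ≤ m` and `u i j + u j k + ū i k + t i j k = 2` for `1 ≤ i < j < k ≤ m`
(each equation involving exactly four variables with coefficient `1`);
out-of-range coordinates are normalized to `0`. -/
def DCPface (m : ℕ) :
    Set ((ℕ → ℕ → ℝ) × (ℕ → ℕ → ℝ) × ℝ × ℝ × (ℕ → ℕ → ℕ → ℝ)) :=
  {p | (∀ i j, ¬(1 ≤ i ∧ i < j ∧ j ≤ m) → p.1 i j = 0 ∧ p.2.1 i j = 0) ∧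
    (∀ i j, 1 ≤ i → i < j → j ≤ m →
      (p.1 i j = 0 ∨ p.1 i j = 1) ∧ (p.2.1 i j = 0 ∨ p.2.1 i j = 1)) ∧
    p.2.2.1 = 0 ∧ p.2.2.2.1 = 1 ∧
    (∀ i j k, ¬(1 ≤ i ∧ i < j ∧ j < k ∧ k ≤ m) → p.2.2.2.2 i j k = 0) ∧
    (∀ i j k, 1 ≤ i → i < j → j < k → k ≤ m →
      p.2.2.2.2 i j k = 0 ∨ p.2.2.2.2 i j k = 1) ∧
    (∀ i j, 1 ≤ i → i < j → j ≤ m → p.1 i j + p.2.1 i j + p.2.2.1 + p.2.2.2.1 = 2) ∧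
    (∀ i j k, 1 ≤ i → i < j → j < k → k ≤ m →
      p.1 i j + p.1 j k + p.2.1 i k + p.2.2.2.2 i j k = 2)}

/-!
A 0/1 vector `u` on the pairs `i < j` comes from a linear order exactly when it satisfies the
triangle conditions `u i j + u j k - u i k ∈ {0, 1}`: they make "`a` before `b`" (read off `u`)
a transitive tournament, and ranking the elements of a finite strict total order yields the
permutation. In the image of the map these are precisely the conditions `t i j k ∈ {0, 1}`,
once the double-covering equations have forced `ū = 1 - u` and `t = 1 - (u i j + u j k - u i k)`.
-/

open Finset in
theorem Finset.exists_bijOn_Icc_card_of_strictTotal {α : Type*} (r : α → α → Prop)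
    (s : Finset α) (irrefl : ∀ a ∈ s, ¬r a a)
    (trans : ∀ a ∈ s, ∀ b ∈ s, ∀ c ∈ s, r a b → r b c → r a c)
    (total : ∀ a ∈ s, ∀ b ∈ s, a ≠ b → r a b ∨ r b a) :
    ∃ f : α → ℕ, Set.BijOn f s (Set.Icc 1 #s) ∧ ∀ a ∈ s, ∀ b ∈ s, r a b → f a < f b := by
  classical
  set f : α → ℕ := fun a => #{c ∈ s | r c a} + 1
  have strictMono : ∀ a ∈ s, ∀ b ∈ s, r a b → f a < f b := by
    intro a ha b hb hab
    have hsub : {c ∈ s | r c a} ⊆ {c ∈ s | r c b} :=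
      monotone_filter_right s fun c hc hca => trans c hc a ha b hb hca hab
    have : {c ∈ s | r c a} ⊂ {c ∈ s | r c b} :=
      (ssubset_iff_of_subset hsub).2 ⟨a, by simp [ha, hab], by simp [irrefl a ha]⟩
    simpa [f] using card_lt_card this
  have mapsTo : Set.MapsTo f s (Set.Icc 1 #s) := by
    intro a ha
    have : {c ∈ s | r c a} ⊂ s :=
      (ssubset_iff_of_subset (filter_subset _ s)).2 ⟨a, ha, by simp [irrefl a ha]⟩
    have := card_lt_card this
    simp only [Set.mem_Icc, f]
    omega
  have injOn : Set.InjOn f s := by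
    intro a ha b hb hfab
    by_contra hne
    rcases total a ha b hb hne with h | h
    · exact (strictMono a ha b hb h).ne hfab
    · exact (strictMono b hb a ha h).ne' hfab
  have surjOn : Set.SurjOn f s (Set.Icc 1 #s) := by
    simpa using surjOn_of_injOn_of_card_le (t := Icc 1 #s) f (by simpa using mapsTo) injOn
      (by simp)
  exact ⟨f, ⟨mapsTo, injOn, surjOn⟩, strictMono⟩

theorem exists_bijOn_Icc_of_triangle (m : ℕ) (u : ℕ → ℕ → ℝ)
    (h01 : ∀ i j, 1 ≤ i → i < j → j ≤ m → u i j = 0 ∨ u i j = 1)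
    (htri : ∀ i j k, 1 ≤ i → i < j → j < k → k ≤ m →
      u i j + u j k - u i k = 0 ∨ u i j + u j k - u i k = 1) :
    ∃ π : ℕ → ℕ, Set.BijOn π (Set.Icc 1 m) (Set.Icc 1 m) ∧
      ∀ i j, 1 ≤ i → i < j → j ≤ m → u i j = if π i < π j then 1 else 0 := by
  set r : ℕ → ℕ → Prop := fun a b => (a < b ∧ u a b = 1) ∨ (b < a ∧ u b a = 0)
  have irrefl : ∀ a ∈ Finset.Icc 1 m, ¬r a a := by simp [r]
  -- For `i < j < k` the triangle condition says that `u i j = u j k` forces `u i k` to that value.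
  have trans : ∀ a ∈ Finset.Icc 1 m, ∀ b ∈ Finset.Icc 1 m, ∀ c ∈ Finset.Icc 1 m,
      r a b → r b c → r a c := by
    simp only [Finset.mem_Icc, r]
    grind
  have total : ∀ a ∈ Finset.Icc 1 m, ∀ b ∈ Finset.Icc 1 m, a ≠ b → r a b ∨ r b a := by
    simp only [Finset.mem_Icc, r]
    grind
  obtain ⟨π, hbij, hr⟩ :=
    Finset.exists_bijOn_Icc_card_of_strictTotal r (Finset.Icc 1 m) irrefl trans total
  simp only [Finset.coe_Icc, Nat.card_Icc, add_tsub_cancel_right] at hbij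
  refine ⟨π, hbij, fun i j hi hij hj => ?_⟩
  have hi' : i ∈ Finset.Icc 1 m := Finset.mem_Icc.2 ⟨hi, by omega⟩
  have hj' : j ∈ Finset.Icc 1 m := Finset.mem_Icc.2 ⟨by omega, hj⟩
  rcases h01 i j hi hij hj with h | h
  · have : π j < π i := hr j hj' i hi' (Or.inr ⟨hij, h⟩)
    rw [h, if_neg this.not_gt]
  · have : π i < π j := hr i hi' j hj' (Or.inl ⟨hij, h⟩)
    rw [h, if_pos this]

noncomputable def pairCoordAffine (i j : ℕ) : (ℕ → ℕ → ℝ) →ᵃ[ℝ] ℝ :=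
  (LinearMap.proj (R := ℝ) (φ := fun _ : ℕ => ℝ) j ∘ₗ LinearMap.proj i).toAffineMap

noncomputable def complementAffine (m : ℕ) : (ℕ → ℕ → ℝ) →ᵃ[ℝ] (ℕ → ℕ → ℝ) :=
  AffineMap.pi fun i => AffineMap.pi fun j =>
    (if 1 ≤ i ∧ i < j ∧ j ≤ m then AffineMap.const ℝ _ 1 - pairCoordAffine i j else 0 :
      (ℕ → ℕ → ℝ) →ᵃ[ℝ] ℝ)

noncomputable def triangleSlackAffine (m : ℕ) : (ℕ → ℕ → ℝ) →ᵃ[ℝ] (ℕ → ℕ → ℕ → ℝ) :=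
  AffineMap.pi fun i => AffineMap.pi fun j => AffineMap.pi fun k =>
    (if 1 ≤ i ∧ i < j ∧ j < k ∧ k ≤ m then
      AffineMap.const ℝ _ 1 - (pairCoordAffine i j + pairCoordAffine j k - pairCoordAffine i k)
      else 0 :
      (ℕ → ℕ → ℝ) →ᵃ[ℝ] ℝ)

noncomputable def lopToDCP (m : ℕ) :
    (ℕ → ℕ → ℝ) →ᵃ[ℝ] ((ℕ → ℕ → ℝ) × (ℕ → ℕ → ℝ) × ℝ × ℝ × (ℕ → ℕ → ℕ → ℝ)) :=
  (AffineMap.id ℝ _).prod <| (complementAffine m).prod <|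
    (AffineMap.const ℝ _ 0).prod <| (AffineMap.const ℝ _ 1).prod (triangleSlackAffine m)

theorem lopToDCP_apply (m : ℕ) (y : ℕ → ℕ → ℝ) :
    lopToDCP m y =
      (y, fun i j => if 1 ≤ i ∧ i < j ∧ j ≤ m then 1 - y i j else 0, 0, 1,
        fun i j k => if 1 ≤ i ∧ i < j ∧ j < k ∧ k ≤ m then 1 - (y i j + y j k - y i k) else 0) := by
  simp only [lopToDCP, complementAffine, triangleSlackAffine, AffineMap.prod_apply,
    AffineMap.id_apply, AffineMap.const_apply, Prod.mk.injEq, true_and]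
  constructor <;> (funext; split_ifs with h <;> simp [h, pairCoordAffine])

theorem lopToDCP_injective (m : ℕ) : Function.Injective (lopToDCP m) :=
  fun y y' h => by simpa [lopToDCP_apply] using congrArg Prod.fst h

theorem lopToDCP_mapsTo (m : ℕ) : Set.MapsTo (lopToDCP m) (LOP m) (DCPface m) := by
  rintro y ⟨hy0, π, -, hy⟩
  rw [lopToDCP_apply]
  refine ⟨fun i j h => ⟨hy0 i j h, if_neg h⟩, fun i j hi hij hj => ?_, rfl, rfl,
    fun i j k h => if_neg h, fun i j k hi hij hjk hk => ?_, fun i j hi hij hj => ?_,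
    fun i j k hi hij hjk hk => ?_⟩
  · dsimp only
    rw [if_pos ⟨hi, hij, hj⟩, hy i j hi hij hj]
    split_ifs <;> norm_num
  -- Comparisons of `π`-values are transitive, so `y i j = y j k` forces `y i k` to the same value.
  · dsimp only
    rw [if_pos ⟨hi, hij, hjk, hk⟩, hy i j hi hij (by omega), hy j k (by omega) hjk hk,
      hy i k hi (hij.trans hjk) hk]
    split_ifs <;> first | omega | norm_num
  · dsimp only
    rw [if_pos ⟨hi, hij, hj⟩]
    ring
  · dsimp only
    rw [if_pos ⟨hi, hij.trans hjk, hk⟩, if_pos ⟨hi, hij, hjk, hk⟩]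
    ring

theorem DCPface_subset_image_lopToDCP (m : ℕ) : DCPface m ⊆ lopToDCP m '' LOP m := by
  rintro ⟨u, ubar, z, h, t⟩ ⟨h0, h01, hz, hh, ht0, ht01, hpair, htriple⟩
  dsimp only at *
  subst hz hh
  have hubar : ∀ i j, 1 ≤ i → i < j → j ≤ m → ubar i j = 1 - u i j := by
    intro i j hi hij hj
    linarith [hpair i j hi hij hj]
  have ht : ∀ i j k, 1 ≤ i → i < j → j < k → k ≤ m → t i j k = 1 - (u i j + u j k - u i k) := by
    intro i j k hi hij hjk hk
    linarith [htriple i j k hi hij hjk hk, hubar i k hi (hij.trans hjk) hk]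
  have htri : ∀ i j k, 1 ≤ i → i < j → j < k → k ≤ m →
      u i j + u j k - u i k = 0 ∨ u i j + u j k - u i k = 1 := by
    intro i j k hi hij hjk hk
    rcases ht01 i j k hi hij hjk hk with h | h <;> [right; left] <;>
      linarith [ht i j k hi hij hjk hk]
  obtain ⟨π, hπ, hu⟩ := exists_bijOn_Icc_of_triangle m u (fun i j hi hij hj =>
    (h01 i j hi hij hj).1) htri
  refine ⟨u, ⟨fun i j h => (h0 i j h).1, π, hπ, hu⟩, ?_⟩
  simp only [lopToDCP_apply, Prod.mk.injEq, true_and]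
  refine ⟨?_, ?_⟩
  · funext i j
    split_ifs with hij
    · exact (hubar i j hij.1 hij.2.1 hij.2.2).symm
    · exact ((h0 i j hij).2).symm
  · funext i j k
    split_ifs with hijk
    · exact (ht i j k hijk.1 hijk.2.1 hijk.2.2.1 hijk.2.2.2).symm
    · exact (ht0 i j k hijk).symm

/-- the map `y ↦ (y, ȳ, 0, 1, t)` with `ȳ i j = 1 - y i j` and
`t i j k = 1 - (y i j + y j k - y i k)` is an injective affine map whose image
is exactly `DCPface m`; so `LOP m` is affinely equivalent to a face of a double
covering polytope. -/
theorem lop_affinely_equivalent_to_dcp_face (m : ℕ) :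
    ∃ A : (ℕ → ℕ → ℝ) →ᵃ[ℝ]
        ((ℕ → ℕ → ℝ) × (ℕ → ℕ → ℝ) × ℝ × ℝ × (ℕ → ℕ → ℕ → ℝ)),
      (∀ y, A y =
        (y,
         fun i j => if 1 ≤ i ∧ i < j ∧ j ≤ m then 1 - y i j else 0,
         0, 1,
         fun i j k => if 1 ≤ i ∧ i < j ∧ j < k ∧ k ≤ m then
           1 - (y i j + y j k - y i k) else 0)) ∧
      Function.Injective A ∧ A '' LOP m = DCPface m :=
  ⟨lopToDCP m, lopToDCP_apply m, lopToDCP_injective m,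
    (lopToDCP_mapsTo m).image_subset.antisymm (DCPface_subset_image_lopToDCP m)⟩
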